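/- Let C be an abelian category and A the heart category of complexes [A \to B \to C] with first map injective and exact in the middle. Let \phi = (\phi_A, \phi_B, \phi_C) : [A \to B \xrightarrow{f} C] \to [A' \to B' \xrightarrow{f'} C'] be a morphism in A, with the target nonzero, and suppose End_C(C') is a local ring. Then \phi is an epimorphism in A if and only if \phi_C is a split epimorphism in C. -/

import Mathlib

open CategoryTheory Limits

namespace ARHeart

variable (C : Type*) [Category C] [Abelian C]

/-- Objects of the heart `𝒜`: complexes `[A ⟶ B ⟶ Z]` in degrees `-2, -1, 0`
with the first map a monomorphism and `Ker g = Im f`. -/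
structure Obj : Type _ where
  A : C
  B : C
  Z : C
  f : A ⟶ B
  g : B ⟶ Z
  w : f ≫ g = 0
  mono : Mono f
  exact : (ShortComplex.mk f g w).Exact

variable {C}

/-- Chain maps between heart objects. -/
@[ext]
structure Hom (V W : Obj C) where
  a : V.A ⟶ W.A
  b : V.B ⟶ W.B
  c : V.Z ⟶ W.Z
  comm₁ : V.f ≫ b = a ≫ W.f
  comm₂ : V.g ≫ c = b ≫ W.g

namespace Hom

variable {U V W : Obj C}

instance : Zero (Hom V W) := ⟨⟨0, 0, 0, by simp, by simp⟩⟩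
instance : Add (Hom V W) :=
  ⟨fun φ ψ => ⟨φ.a + ψ.a, φ.b + ψ.b, φ.c + ψ.c,
    by simp [Preadditive.comp_add, Preadditive.add_comp, φ.comm₁, ψ.comm₁],
    by simp [Preadditive.comp_add, Preadditive.add_comp, φ.comm₂, ψ.comm₂]⟩⟩
instance : Neg (Hom V W) :=
  ⟨fun φ => ⟨-φ.a, -φ.b, -φ.c,
    by simp [φ.comm₁], by simp [φ.comm₂]⟩⟩
instance : Sub (Hom V W) :=
  ⟨fun φ ψ => ⟨φ.a - ψ.a, φ.b - ψ.b, φ.c - ψ.c,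
    by simp [Preadditive.comp_sub, Preadditive.sub_comp, φ.comm₁, ψ.comm₁],
    by simp [Preadditive.comp_sub, Preadditive.sub_comp, φ.comm₂, ψ.comm₂]⟩⟩
instance : SMul ℕ (Hom V W) :=
  ⟨fun n φ => ⟨n • φ.a, n • φ.b, n • φ.c,
    by simp [φ.comm₁], by simp [φ.comm₂]⟩⟩
instance : SMul ℤ (Hom V W) :=
  ⟨fun n φ => ⟨n • φ.a, n • φ.b, n • φ.c,
    by simp [φ.comm₁], by simp [φ.comm₂]⟩⟩

@[simp] lemma add_a (φ ψ : Hom V W) : (φ + ψ).a = φ.a + ψ.a := rfl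
@[simp] lemma add_b (φ ψ : Hom V W) : (φ + ψ).b = φ.b + ψ.b := rfl
@[simp] lemma add_c (φ ψ : Hom V W) : (φ + ψ).c = φ.c + ψ.c := rfl
@[simp] lemma sub_a (φ ψ : Hom V W) : (φ - ψ).a = φ.a - ψ.a := rfl
@[simp] lemma sub_b (φ ψ : Hom V W) : (φ - ψ).b = φ.b - ψ.b := rfl
@[simp] lemma sub_c (φ ψ : Hom V W) : (φ - ψ).c = φ.c - ψ.c := rfl
@[simp] lemma neg_a (φ : Hom V W) : (-φ).a = -φ.a := rfl
@[simp] lemma neg_b (φ : Hom V W) : (-φ).b = -φ.b := rfl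
@[simp] lemma neg_c (φ : Hom V W) : (-φ).c = -φ.c := rfl
@[simp] lemma zero_a : (0 : Hom V W).a = 0 := rfl
@[simp] lemma zero_b : (0 : Hom V W).b = 0 := rfl
@[simp] lemma zero_c : (0 : Hom V W).c = 0 := rfl

instance : AddCommGroup (Hom V W) :=
  Function.Injective.addCommGroup
    (fun φ => (φ.a, φ.b, φ.c))
    (fun φ ψ h => by
      ext <;> simp only [Prod.mk.injEq] at h <;> tauto)
    rfl (fun _ _ => rfl) (fun _ => rfl) (fun _ _ => rfl) (fun _ _ => rfl) (fun _ _ => rfl)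

/-- Identity chain map. -/
def id (V : Obj C) : Hom V V := ⟨𝟙 _, 𝟙 _, 𝟙 _, by simp, by simp⟩

/-- Composition of chain maps. -/
def comp (φ : Hom U V) (ψ : Hom V W) : Hom U W :=
  ⟨φ.a ≫ ψ.a, φ.b ≫ ψ.b, φ.c ≫ ψ.c,
    by rw [← Category.assoc, φ.comm₁, Category.assoc, ψ.comm₁, Category.assoc],
    by rw [← Category.assoc, φ.comm₂, Category.assoc, ψ.comm₂, Category.assoc]⟩

@[simp] lemma comp_a (φ : Hom U V) (ψ : Hom V W) : (φ.comp ψ).a = φ.a ≫ ψ.a := rfl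
@[simp] lemma comp_b (φ : Hom U V) (ψ : Hom V W) : (φ.comp ψ).b = φ.b ≫ ψ.b := rfl
@[simp] lemma comp_c (φ : Hom U V) (ψ : Hom V W) : (φ.comp ψ).c = φ.c ≫ ψ.c := rfl

lemma sub_comp (φ φ' : Hom U V) (ψ : Hom V W) :
    (φ - φ').comp ψ = φ.comp ψ - φ'.comp ψ := by
  ext <;> simp [Preadditive.sub_comp]

lemma comp_sub (φ : Hom U V) (ψ ψ' : Hom V W) :
    φ.comp (ψ - ψ') = φ.comp ψ - φ.comp ψ' := by
  ext <;> simp [Preadditive.comp_sub]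

lemma add_comp (φ φ' : Hom U V) (ψ : Hom V W) :
    (φ + φ').comp ψ = φ.comp ψ + φ'.comp ψ := by
  ext <;> simp [Preadditive.add_comp]

lemma comp_add (φ : Hom U V) (ψ ψ' : Hom V W) :
    φ.comp (ψ + ψ') = φ.comp ψ + φ.comp ψ' := by
  ext <;> simp [Preadditive.comp_add]

end Hom

/-- The subgroup of chain maps homotopic to zero. -/
def nullHomotopic (V W : Obj C) : AddSubgroup (Hom V W) where
  carrier := {χ | ∃ (s₁ : V.B ⟶ W.A) (s₀ : V.Z ⟶ W.B),
    χ.a = V.f ≫ s₁ ∧ χ.b = V.g ≫ s₀ + s₁ ≫ W.f ∧ χ.c = s₀ ≫ W.g}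
  add_mem' := by
    rintro χ χ' ⟨s₁, s₀, h1, h2, h3⟩ ⟨t₁, t₀, h1', h2', h3'⟩
    exact ⟨s₁ + t₁, s₀ + t₀, by
      simp [h1, h1', Preadditive.comp_add], by
      simp only [Hom.add_b, h2, h2', Preadditive.comp_add, Preadditive.add_comp]
      abel, by simp [h3, h3', Preadditive.add_comp]⟩
  zero_mem' := ⟨0, 0, by simp, by simp, by simp⟩
  neg_mem' := by
    rintro χ ⟨s₁, s₀, h1, h2, h3⟩
    exact ⟨-s₁, -s₀, by simp [h1], by simp [h2]; abel, by simp [h3]⟩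

lemma comp_null {U V W : Obj C} (χ : Hom U V) (ψ : Hom V W)
    (h : χ ∈ nullHomotopic U V) : χ.comp ψ ∈ nullHomotopic U W := by
  obtain ⟨s₁, s₀, h1, h2, h3⟩ := h
  refine ⟨s₁ ≫ ψ.a, s₀ ≫ ψ.b, ?_, ?_, ?_⟩
  · simp [h1]
  · simp only [Hom.comp_b, h2, Preadditive.add_comp, Category.assoc, ψ.comm₁]
  · simp only [Hom.comp_c, h3, Category.assoc, ψ.comm₂]

lemma null_comp {U V W : Obj C} (φ : Hom U V) (χ : Hom V W)
    (h : χ ∈ nullHomotopic V W) : φ.comp χ ∈ nullHomotopic U W := by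
  obtain ⟨s₁, s₀, h1, h2, h3⟩ := h
  refine ⟨φ.b ≫ s₁, φ.c ≫ s₀, ?_, ?_, ?_⟩
  · simp only [Hom.comp_a, h1, ← Category.assoc, φ.comm₁]
  · simp only [Hom.comp_b, h2, Preadditive.comp_add, ← Category.assoc, φ.comm₂]
  · simp [h3]

instance instCategory : Category (Obj C) where
  Hom V W := Hom V W ⧸ nullHomotopic V W
  id V := QuotientAddGroup.mk (Hom.id V)
  comp := Quotient.map₂ Hom.comp (by
    intro φ φ' hφ ψ ψ' hψ
    replace hφ := QuotientAddGroup.leftRel_apply.mp hφ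
    replace hψ := QuotientAddGroup.leftRel_apply.mp hψ
    refine QuotientAddGroup.leftRel_apply.mpr ?_
    have : -φ.comp ψ + φ'.comp ψ' = (-φ + φ').comp ψ' + φ.comp (-ψ + ψ') := by
      refine Hom.ext ?_ ?_ ?_ <;>
        simp [Hom.comp, Preadditive.add_comp, Preadditive.comp_add,
          Preadditive.neg_comp, Preadditive.comp_neg] <;> abel
    rw [this]
    exact AddSubgroup.add_mem _ (comp_null _ _ hφ) (null_comp _ _ hψ))
  id_comp := by
    rintro V W ⟨φ⟩
    exact congrArg (QuotientAddGroup.mk)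
      (Hom.ext (by simp [Hom.comp, Hom.id]) (by simp [Hom.comp, Hom.id])
        (by simp [Hom.comp, Hom.id]))
  comp_id := by
    rintro V W ⟨φ⟩
    exact congrArg (QuotientAddGroup.mk)
      (Hom.ext (by simp [Hom.comp, Hom.id]) (by simp [Hom.comp, Hom.id])
        (by simp [Hom.comp, Hom.id]))
  assoc := by
    rintro U V W X ⟨φ⟩ ⟨ψ⟩ ⟨ρ⟩
    exact congrArg (QuotientAddGroup.mk)
      (Hom.ext (by simp [Hom.comp]) (by simp [Hom.comp]) (by simp [Hom.comp]))

/-- The homotopy class of a chain map, as a morphism in the heart. -/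
def mkHom {V W : Obj C} (φ : Hom V W) : V ⟶ W := QuotientAddGroup.mk φ

lemma mkHom_surjective {V W : Obj C} : Function.Surjective (mkHom (V := V) (W := W)) :=
  fun q => Quotient.inductionOn q (fun φ => ⟨φ, rfl⟩)

@[simp] lemma mkHom_comp {U V W : Obj C} (φ : Hom U V) (ψ : Hom V W) :
    mkHom φ ≫ mkHom ψ = mkHom (φ.comp ψ) := rfl

instance homAddCommGroup (V W : Obj C) : AddCommGroup (V ⟶ W) :=
  inferInstanceAs (AddCommGroup (Hom V W ⧸ nullHomotopic V W))

lemma mkHom_add {V W : Obj C} (φ ψ : Hom V W) :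
    (mkHom (φ + ψ) : V ⟶ W) = mkHom φ + mkHom ψ := rfl

instance : Preadditive (Obj C) where
  homGroup := homAddCommGroup
  add_comp := by
    rintro U V W ⟨φ⟩ ⟨φ'⟩ ⟨ψ⟩
    show mkHom ((φ + φ').comp ψ) = mkHom ((φ.comp ψ) + (φ'.comp ψ))
    rw [Hom.add_comp]
  comp_add := by
    rintro U V W ⟨φ⟩ ⟨ψ⟩ ⟨ψ'⟩
    show mkHom (φ.comp (ψ + ψ')) = mkHom ((φ.comp ψ) + (φ.comp ψ'))
    rw [Hom.comp_add]

open ZeroObject in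
/-- The object `P_X = [0 ⟶ 0 ⟶ X]`. -/
noncomputable def P (X : C) : Obj C where
  A := 0
  B := 0
  Z := X
  f := 0
  g := 0
  w := by simp
  mono := by infer_instance
  exact := ShortComplex.exact_of_isZero_X₂ _ (isZero_zero C)

/-- The functor `P : C ⥤ 𝒜`, `X ↦ [0 ⟶ 0 ⟶ X]`. -/
noncomputable def Pfunctor : C ⥤ Obj C where
  obj := P
  map {X Y} u := mkHom ⟨0, 0, u, by simp [P] <;> rfl, by simp [P] <;> exact zero_comp.symm⟩
  map_id X := congrArg QuotientAddGroup.mk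
    (Hom.ext (by simp [Hom.id, P] <;> rfl) (by simp [Hom.id, P] <;> rfl) (by simp [Hom.id, P]))
  map_comp {X Y Z} u v := congrArg QuotientAddGroup.mk
    (Hom.ext (by simp [Hom.comp]) (by simp [Hom.comp]) (by simp [Hom.comp] <;> rfl))

/-- The heart object `[Ker g ⟶ B ⟶ Z]` associated to a morphism `g : B ⟶ Z`. -/
noncomputable def kernelObj {B Z : C} (g : B ⟶ Z) : Obj C where
  A := kernel g
  B := B
  Z := Z
  f := kernel.ι g
  g := g
  w := kernel.condition g
  mono := inferInstance
  exact := ShortComplex.exact_of_f_is_kernel _ (kernelIsKernel g)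

end ARHeart

section Aux

open CategoryTheory Limits ARHeart

variable {C : Type*} [Category C] [Abelian C]

/-- In a heart object, anything killed by `g` factors through `f`. -/
lemma ARHeart.factor_thru_f (U : ARHeart.Obj C) {X : C} (h : X ⟶ U.B)
    (hh : h ≫ U.g = 0) : ∃ t : X ⟶ U.A, t ≫ U.f = h := by
  have := U.mono
  exact ⟨U.exact.fIsKernel.lift (KernelFork.ofι h hh),
    U.exact.fIsKernel.fac (KernelFork.ofι h hh) WalkingParallelPair.zero⟩

lemma ARHeart.mkHom_eq_zero_iff {V W : ARHeart.Obj C} (φ : ARHeart.Hom V W) :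
    mkHom φ = (0 : V ⟶ W) ↔ φ ∈ nullHomotopic V W :=
  QuotientAddGroup.eq_zero_iff φ

/-- If `g` of a heart object is a split epimorphism, the object is zero. -/
lemma ARHeart.isZero_of_section {W : ARHeart.Obj C} (u : W.Z ⟶ W.B)
    (hu : u ≫ W.g = 𝟙 W.Z) : IsZero W := by
  rw [IsZero.iff_id_eq_zero]
  show mkHom (Hom.id W) = 0
  rw [ARHeart.mkHom_eq_zero_iff]
  obtain ⟨s₁, hs₁⟩ := ARHeart.factor_thru_f W (𝟙 W.B - W.g ≫ u)
    (by simp [Preadditive.sub_comp, Category.assoc, hu])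
  have := W.mono
  refine ⟨s₁, u, ?_, ?_, by simpa [Hom.id] using hu.symm⟩
  · rw [← cancel_mono W.f]
    show 𝟙 W.A ≫ W.f = (W.f ≫ s₁) ≫ W.f
    rw [Category.id_comp, Category.assoc, hs₁, Preadditive.comp_sub, Category.comp_id,
      ← Category.assoc, W.w, zero_comp, sub_zero]
  · show 𝟙 W.B = W.g ≫ u + s₁ ≫ W.f
    rw [hs₁]; abel

/-- Easy direction: a section of `φ.c` makes `mkHom φ` an epimorphism. -/
lemma ARHeart.epi_of_section {V W : ARHeart.Obj C} (φ : ARHeart.Hom V W)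
    {s : W.Z ⟶ V.Z} (hs : s ≫ φ.c = 𝟙 W.Z) : Epi (mkHom φ) := by
  refine Preadditive.epi_of_cancel_zero _ (fun {U} q hq => ?_)
  obtain ⟨ψ, rfl⟩ := mkHom_surjective q
  rw [mkHom_comp, ARHeart.mkHom_eq_zero_iff] at hq
  obtain ⟨s₁, s₀, h1, h2, h3⟩ := hq
  have h3' : φ.c ≫ ψ.c = s₀ ≫ U.g := by simpa using h3
  rw [ARHeart.mkHom_eq_zero_iff]
  -- candidate homotopy : t₀ = s ≫ s₀, t₁ from exactness
  obtain ⟨t₁, ht₁⟩ := ARHeart.factor_thru_f U (ψ.b - W.g ≫ s ≫ s₀) (by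
    simp only [Preadditive.sub_comp, Category.assoc, ← h3', ← ψ.comm₂]
    rw [show s ≫ φ.c ≫ ψ.c = ψ.c by rw [← Category.assoc, hs, Category.id_comp], sub_self])
  have := U.mono
  refine ⟨t₁, s ≫ s₀, ?_, by rw [ht₁]; abel, ?_⟩
  · rw [← cancel_mono U.f, Category.assoc, ht₁, Preadditive.comp_sub, ψ.comm₁]
    have hz : W.f ≫ W.g ≫ s ≫ s₀ = 0 := by rw [← Category.assoc, W.w, zero_comp]
    rw [hz, sub_zero]
  · rw [Category.assoc, ← h3', ← Category.assoc, hs, Category.id_comp]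

end Aux
open CategoryTheory Limits ARHeart in
theorem stmt7'' {C : Type*} [Category C] [Abelian C] {V W : ARHeart.Obj C}
    (φ : ARHeart.Hom V W) (hW : ¬ IsZero W) (hloc : IsLocalRing (End W.Z)) :
    Epi (ARHeart.mkHom φ) ↔ ∃ s : W.Z ⟶ V.Z, s ≫ φ.c = 𝟙 W.Z := by
  constructor
  · intro hepi
    -- the map δ = (φ.c, W.g) : V.Z ⊞ W.B ⟶ W.Z and its kernel object
    let δ : V.Z ⊞ W.B ⟶ W.Z := biprod.desc φ.c W.g
    let U : ARHeart.Obj C := kernelObj δ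
    -- the chain map ψ : W ⟶ U
    have hfδ : (W.f ≫ biprod.inr) ≫ δ = 0 := by
      simp [δ, Category.assoc, W.w]
    let ψ : ARHeart.Hom W U :=
      ⟨kernel.lift δ (W.f ≫ biprod.inr) hfδ, biprod.inr, 𝟙 W.Z,
        by simp [U, kernelObj], by simp [U, kernelObj, δ]⟩
    -- φ.comp ψ is null-homotopic
    have hcomp : mkHom φ ≫ mkHom ψ = 0 := by
      rw [mkHom_comp, ARHeart.mkHom_eq_zero_iff]
      have hker : (φ.b ≫ biprod.inr - V.g ≫ biprod.inl) ≫ δ = 0 := by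
        simp [δ, Preadditive.sub_comp, Category.assoc, φ.comm₂]
      refine ⟨kernel.lift δ _ hker, biprod.inl, ?_, ?_, ?_⟩
      · have : Mono U.f := U.mono
        rw [← cancel_mono U.f]
        show (φ.a ≫ kernel.lift δ (W.f ≫ biprod.inr) hfδ) ≫ kernel.ι δ =
          (V.f ≫ kernel.lift δ _ hker) ≫ kernel.ι δ
        simp only [Category.assoc, kernel.lift_ι]
        rw [← Category.assoc φ.a, ← φ.comm₁]
        simp [Preadditive.comp_sub, ← Category.assoc, V.w]
      · show φ.b ≫ biprod.inr = V.g ≫ biprod.inl + kernel.lift δ _ hker ≫ kernel.ι δ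
        rw [kernel.lift_ι]; abel
      · show φ.c ≫ 𝟙 W.Z = biprod.inl ≫ δ
        simp [δ]
    -- hence ψ is null-homotopic
    have hψ : mkHom ψ = 0 := by
      have : mkHom φ ≫ mkHom ψ = mkHom φ ≫ 0 := by rw [hcomp, comp_zero]
      exact (cancel_epi (mkHom φ)).mp this
    rw [ARHeart.mkHom_eq_zero_iff] at hψ
    obtain ⟨s₁, s₀, -, -, h3⟩ := hψ
    -- so δ is split epi: s₀ ≫ δ = 𝟙
    have hsec : s₀ ≫ δ = 𝟙 W.Z := by
      have h3' : (𝟙 W.Z : W.Z ⟶ U.Z) = s₀ ≫ U.g := h3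
      exact h3'.symm
    have hsplit : (s₀ ≫ biprod.fst) ≫ φ.c + (s₀ ≫ biprod.snd) ≫ W.g = 𝟙 W.Z := by
      rw [← hsec]
      show _ = s₀ ≫ biprod.desc φ.c W.g
      erw [biprod.desc_eq, Preadditive.comp_add]
      erw [Category.assoc, Category.assoc]
      rfl
    haveI := hloc
    let x : End W.Z := (s₀ ≫ biprod.fst) ≫ φ.c
    let y : End W.Z := (s₀ ≫ biprod.snd) ≫ W.g
    have hxy : x + y = 1 := hsplit
    rcases IsLocalRing.isUnit_or_isUnit_of_add_one hxy with hx | hy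
    · haveI : IsIso (x : W.Z ⟶ W.Z) := (CategoryTheory.isUnit_iff_isIso x).mp hx
      refine ⟨inv (x : W.Z ⟶ W.Z) ≫ s₀ ≫ biprod.fst, ?_⟩
      have h : inv (x : W.Z ⟶ W.Z) ≫ (s₀ ≫ biprod.fst) ≫ φ.c = 𝟙 W.Z := by
        rw [show (s₀ ≫ biprod.fst) ≫ φ.c = (x : W.Z ⟶ W.Z) from rfl, IsIso.inv_hom_id]
      simp only [Category.assoc] at h ⊢
      exact h
    · exfalso
      apply hW
      haveI : IsIso (y : W.Z ⟶ W.Z) := (CategoryTheory.isUnit_iff_isIso y).mp hy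
      refine ARHeart.isZero_of_section (inv (y : W.Z ⟶ W.Z) ≫ s₀ ≫ biprod.snd) ?_
      have h : inv (y : W.Z ⟶ W.Z) ≫ (s₀ ≫ biprod.snd) ≫ W.g = 𝟙 W.Z := by
        rw [show (s₀ ≫ biprod.snd) ≫ W.g = (y : W.Z ⟶ W.Z) from rfl, IsIso.inv_hom_id]
      simp only [Category.assoc] at h ⊢
      exact h
  · rintro ⟨s, hs⟩
    exact ARHeart.epi_of_section φ hs
open CategoryTheory Limits ARHeart in
/-- for a morphism `φ : [A ⟶ B ⟶ C] ⟶ [A' ⟶ B' ⟶ C']` in the heart `𝒜`,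
with nonzero target and `End (C')` a local ring, `φ` is an epimorphism in `𝒜` iff
`φ_C` is a split epimorphism in `C`. -/
theorem stmt7 {C : Type*} [Category C] [Abelian C] {V W : ARHeart.Obj C}
    (φ : ARHeart.Hom V W) (hW : ¬ IsZero W) (hloc : IsLocalRing (End W.Z)) :
    Epi (ARHeart.mkHom φ) ↔ ∃ s : W.Z ⟶ V.Z, s ≫ φ.c = 𝟙 W.Z := by
  exact stmt7'' φ hW hloc
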